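/- arXiv:1611.07455 — 2 statements merged into one kernel-verified Lean document; each statement's English description precedes it below -/
import Mathlib

section
/- Let ρ_ABC = ∑_{k=1}^K p_k ρ^k_ABC be a convex combination of states on H_A ⊗ H_B ⊗ H_C. If the marginal states {ρ_B^k}_k are mutually orthogonal (ρ_B^k ⊥ ρ_B^{k′} for k ≠ k′) and the marginal states {ρ_C^k}_k are mutually orthogonal (ρ_C^k ⊥ ρ_C^{k′} for k ≠ k′), then T^(a)(ρ_ABC) = ∑_{k=1}^K p_k T^(a)(ρ^k_ABC). -/
open Matrix Kronecker
open scoped Classical ComplexOrder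

noncomputable section

/-- A state (density operator): positive semidefinite with unit trace. -/
def IsState {n : Type*} [Fintype n] (ρ : Matrix n n ℂ) : Prop :=
  ρ.PosSemidef ∧ ρ.trace = 1

/-- A unit vector. -/
def UnitVec {n : Type*} [Fintype n] (ψ : n → ℂ) : Prop :=
  ∑ i, Complex.normSq (ψ i) = 1

/-- The rank-one projection `|ψ⟩⟨ψ|`. -/
def pureSt {n : Type*} (ψ : n → ℂ) : Matrix n n ℂ :=
  Matrix.vecMulVec ψ (star ψ)

/-- Von Neumann entropy `S(ρ) = -Tr(ρ log ρ)`, computed via the eigenvalues of a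
Hermitian matrix (with the convention `0 log 0 = 0`, and junk value `0` on
non-Hermitian input). -/
def entropy {n : Type*} [Fintype n] [DecidableEq n] (ρ : Matrix n n ℂ) : ℝ :=
  if h : ρ.IsHermitian then -∑ i, h.eigenvalues i * Real.log (h.eigenvalues i) else 0

/-- Partial trace over the second tensor factor. -/
def ptraceRight {X Y : Type*} [Fintype Y] (ρ : Matrix (X × Y) (X × Y) ℂ) :
    Matrix X X ℂ :=
  fun x x' => ∑ y, ρ (x, y) (x', y)

/-- Partial trace over the first tensor factor. -/
def ptraceLeft {X Y : Type*} [Fintype X] (ρ : Matrix (X × Y) (X × Y) ℂ) :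
    Matrix Y Y ℂ :=
  fun y y' => ∑ x, ρ (x, y) (x, y')

/-- Marginal `ρ_AB` of a tripartite state. -/
def margAB {A B C : Type*} [Fintype C] (ρ : Matrix (A × B × C) (A × B × C) ℂ) :
    Matrix (A × B) (A × B) ℂ :=
  fun x y => ∑ c, ρ (x.1, x.2, c) (y.1, y.2, c)

/-- Marginal `ρ_AC` of a tripartite state. -/
def margAC {A B C : Type*} [Fintype B] (ρ : Matrix (A × B × C) (A × B × C) ℂ) :
    Matrix (A × C) (A × C) ℂ :=
  fun x y => ∑ b, ρ (x.1, b, x.2) (y.1, b, y.2)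

/-- Marginal `ρ_BC` of a tripartite state. -/
def margBC {A B C : Type*} [Fintype A] (ρ : Matrix (A × B × C) (A × B × C) ℂ) :
    Matrix (B × C) (B × C) ℂ :=
  fun x y => ∑ a, ρ (a, x.1, x.2) (a, y.1, y.2)

/-- Marginal `ρ_A` of a tripartite state. -/
def margA {A B C : Type*} [Fintype B] [Fintype C]
    (ρ : Matrix (A × B × C) (A × B × C) ℂ) : Matrix A A ℂ :=
  fun a a' => ∑ b, ∑ c, ρ (a, b, c) (a', b, c)

/-- Marginal `ρ_B` of a tripartite state. -/
def margB {A B C : Type*} [Fintype A] [Fintype C]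
    (ρ : Matrix (A × B × C) (A × B × C) ℂ) : Matrix B B ℂ :=
  fun b b' => ∑ a, ∑ c, ρ (a, b, c) (a, b', c)

/-- Marginal `ρ_C` of a tripartite state. -/
def margC {A B C : Type*} [Fintype A] [Fintype B]
    (ρ : Matrix (A × B × C) (A × B × C) ℂ) : Matrix C C ℂ :=
  fun c c' => ∑ a, ∑ b, ρ (a, b, c) (a, b, c')

/-- `T^(a)(ρ_ABC) = S(ρ_AB) + S(ρ_AC) − S(ρ_B) − S(ρ_C)`, the deviation from
saturation of strong subadditivity. -/
def Ta {A B C : Type*} [Fintype A] [Fintype B] [Fintype C]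
    [DecidableEq A] [DecidableEq B] [DecidableEq C]
    (ρ : Matrix (A × B × C) (A × B × C) ℂ) : ℝ :=
  entropy (margAB ρ) + entropy (margAC ρ) - entropy (margB ρ) - entropy (margC ρ)

/-- Entanglement of formation of a bipartite state (infimum over pure-state
ensembles realizing `ρ`). -/
def eof {X Y : Type*} [Fintype X] [Fintype Y] [DecidableEq X]
    (ρ : Matrix (X × Y) (X × Y) ℂ) : ℝ :=
  sInf { e : ℝ | ∃ (K : ℕ) (p : Fin K → ℝ) (ψ : Fin K → X × Y → ℂ),
    (∀ i, 0 ≤ p i) ∧ (∀ i, UnitVec (ψ i)) ∧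
    ρ = ∑ i, p i • pureSt (ψ i) ∧
    e = ∑ i, p i * entropy (ptraceRight (pureSt (ψ i))) }

/-- Probability of obtaining the outcome of the rank-one projector `|u⟩⟨u|`
measured on the second subsystem. -/
def measProb {X Y : Type*} [Fintype X] [Fintype Y] [DecidableEq X]
    (ρ : Matrix (X × Y) (X × Y) ℂ) (u : Y → ℂ) : ℝ :=
  ((((1 : Matrix X X ℂ) ⊗ₖ pureSt u) * ρ).trace).re

/-- Post-measurement state of the first subsystem after obtaining the outcome
of the rank-one projector `|u⟩⟨u|` on the second subsystem. -/
def postState {X Y : Type*} [Fintype X] [Fintype Y] [DecidableEq X]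
    (ρ : Matrix (X × Y) (X × Y) ℂ) (u : Y → ℂ) : Matrix X X ℂ :=
  (measProb ρ u)⁻¹ •
    ptraceRight (((1 : Matrix X X ℂ) ⊗ₖ pureSt u) * ρ * ((1 : Matrix X X ℂ) ⊗ₖ pureSt u))

/-- Classical correlation `J^(Y)(ρ_XY)`: supremum over complete families of
mutually orthogonal rank-one projectors on `H_Y` (parametrized by orthonormal
bases `v` of `H_Y`) of `S(ρ_X) − ∑ᵢ pᵢ S(ρ_{X|i})`. -/
def classicalCorr {X Y : Type*} [Fintype X] [Fintype Y] [DecidableEq X] [DecidableEq Y]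
    (ρ : Matrix (X × Y) (X × Y) ℂ) : ℝ :=
  sSup { r : ℝ | ∃ v : Y → Y → ℂ,
    (∀ i j, star (v i) ⬝ᵥ v j = if i = j then 1 else 0) ∧
    r = entropy (ptraceRight ρ) - ∑ i, measProb ρ (v i) * entropy (postState ρ (v i)) }

/-- Quantum mutual information `I(ρ_XY) = S(ρ_X) + S(ρ_Y) − S(ρ_XY)`. -/
def mutualInfo {X Y : Type*} [Fintype X] [Fintype Y] [DecidableEq X] [DecidableEq Y]
    (ρ : Matrix (X × Y) (X × Y) ℂ) : ℝ :=
  entropy (ptraceRight ρ) + entropy (ptraceLeft ρ) - entropy ρ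

/-- Quantum discord `D^(Y)(ρ_XY)` with measurement on the second subsystem. -/
def discord {X Y : Type*} [Fintype X] [Fintype Y] [DecidableEq X] [DecidableEq Y]
    (ρ : Matrix (X × Y) (X × Y) ℂ) : ℝ :=
  mutualInfo ρ - classicalCorr ρ

/-- Quantum conditional entropy `S(X|Y) = S(ρ_XY) − S(ρ_Y)`. -/
def condEnt {X Y : Type*} [Fintype X] [Fintype Y] [DecidableEq X] [DecidableEq Y]
    (ρ : Matrix (X × Y) (X × Y) ℂ) : ℝ :=
  entropy ρ - entropy (ptraceLeft ρ)

/-- Marginal `ρ_{AB̃}` (`B̃ = BE`) of a four-partite state on `A × B × C × E`. -/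
def margABE {A B C E : Type*} [Fintype C]
    (Ψ : Matrix (A × B × C × E) (A × B × C × E) ℂ) :
    Matrix (A × B × E) (A × B × E) ℂ :=
  fun x y => ∑ c, Ψ (x.1, x.2.1, c, x.2.2) (y.1, y.2.1, c, y.2.2)

/-- Marginal `ρ_{AC̃}` (`C̃ = CE`) of a four-partite state on `A × B × C × E`. -/
def margACE {A B C E : Type*} [Fintype B]
    (Ψ : Matrix (A × B × C × E) (A × B × C × E) ℂ) :
    Matrix (A × C × E) (A × C × E) ℂ :=
  fun x y => ∑ b, Ψ (x.1, b, x.2.1, x.2.2) (y.1, b, y.2.1, y.2.2)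

/-- Marginal `ρ_ABC` of a four-partite state on `A × B × C × E` (trace out `E`). -/
def margABC {A B C E : Type*} [Fintype E]
    (Ψ : Matrix (A × B × C × E) (A × B × C × E) ℂ) :
    Matrix (A × B × C) (A × B × C) ℂ :=
  fun x y => ∑ e, Ψ (x.1, x.2.1, x.2.2, e) (y.1, y.2.1, y.2.2, e)

/-- Reordering `(A ⊗ (B^L ⊗ C^L)) ⊗ (B^R ⊗ C^R) ≃ A ⊗ (B^L ⊗ B^R) ⊗ (C^L ⊗ C^R)`. -/
def reindexYZ (A BL BR CL CR : Type*) :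
    (A × (BL × CL)) × (BR × CR) ≃ A × (BL × BR) × (CL × CR) where
  toFun x := (x.1.1, (x.1.2.1, x.2.1), (x.1.2.2, x.2.2))
  invFun x := ((x.1, (x.2.1.1, x.2.2.1)), (x.2.1.2, x.2.2.2))
  left_inv := by rintro ⟨⟨a, bl, cl⟩, br, cr⟩; rfl
  right_inv := by rintro ⟨a, ⟨bl, br⟩, cl, cr⟩; rfl

/-!
Under the hypotheses, each of the four marginals of `ρ` is a mixture of mutually orthogonal
states. For `B` and `C` this is assumed; for `AB` and `AC` it follows because, for positive
operators `σ = SᴴS` and `τ = TᴴT` on `X ⊗ Y`, orthogonality of the `Y`-marginals forces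
`S Tᴴ = 0`, hence `στ = 0`. Entropy is additive on orthogonal positive operators, so the entropy
of such a mixture is `∑ₖ pₖ S(σₖ) + H(p)`. The Shannon term `H(p)` enters `T^(a)` twice with a
plus sign (from `AB`, `AC`) and twice with a minus sign (from `B`, `C`), and cancels.
-/
namespace Polynomial

variable {R A : Type*} [CommSemiring R] [Semiring A] [Algebra R A]

theorem mul_aeval_add_of_mul_eq_zero {a b : A} (hab : a * b = 0) (q : R[X]) :
    a * aeval (a + b) q = a * aeval a q := by
  have hpow (k : ℕ) : a * (a + b) ^ k = a * a ^ k := by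
    rw [(show SemiconjBy a (a + b) a by simp [SemiconjBy, mul_add, hab]).pow_right k,
      pow_mul_comm']
  induction q using Polynomial.induction_on' with
  | add p q hp hq => simp only [map_add, mul_add, hp, hq]
  | monomial k c => simp only [aeval_monomial, ← Algebra.smul_def, mul_smul_comm, hpow]

theorem aeval_add_of_mul_eq_zero {a b : A} (hab : a * b = 0) (hba : b * a = 0) {q : R[X]}
    (hq : q.coeff 0 = 0) : aeval (a + b) q = aeval a q + aeval b q := by
  obtain ⟨r, rfl⟩ := X_dvd_iff.mpr hq
  simp only [map_mul, aeval_X, add_mul, mul_aeval_add_of_mul_eq_zero hab,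
    add_comm a b ▸ mul_aeval_add_of_mul_eq_zero hba]

theorem exists_eval_eq_on_finset {K : Type*} [Field K] (s : Finset K) (f : K → K) :
    ∃ q : K[X], ∀ x ∈ s, q.eval x = f x :=
  ⟨Lagrange.interpolate s id f,
    fun _ hx => Lagrange.eval_interpolate_at_node f (Set.injOn_id _) hx⟩

end Polynomial

namespace Matrix

variable {n : Type*} [Fintype n] [DecidableEq n]

/-- On the finite spectra involved, `f` agrees with a polynomial without constant term, and such
polynomials are additive on orthogonal pairs. -/
theorem cfc_add_of_mul_eq_zero {M N : Matrix n n ℂ} (hM : M.IsHermitian) (hN : N.IsHermitian)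
    (hMN : M * N = 0) {f : ℝ → ℝ} (hf : f 0 = 0) :
    cfc f (M + N) = cfc f M + cfc f N := by
  have hNM : N * M = 0 := by
    simpa [hM.eq, hN.eq] using congrArg conjTranspose hMN
  obtain ⟨q, hq⟩ := Polynomial.exists_eval_eq_on_finset
    (insert 0 ((finite_real_spectrum (A := M)).toFinset ∪
      (finite_real_spectrum (A := N)).toFinset ∪ (finite_real_spectrum (A := M + N)).toFinset)) f
  have hcfc {X : Matrix n n ℂ} (hX : X.IsHermitian) (hs : ∀ x ∈ spectrum ℝ X, q.eval x = f x) :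
      cfc f X = Polynomial.aeval X q := by
    rw [← cfc_polynomial q X hX.isSelfAdjoint]
    exact cfc_congr fun x hx => (hs x hx).symm
  rw [hcfc (hM.add hN) fun x hx => hq x (by simp [hx]), hcfc hM fun x hx => hq x (by simp [hx]),
    hcfc hN fun x hx => hq x (by simp [hx])]
  refine Polynomial.aeval_add_of_mul_eq_zero hMN hNM ?_
  simp [Polynomial.coeff_zero_eq_eval_zero, hq 0 (by simp), hf]

end Matrix

section Entropy

variable {n : Type*} [Fintype n] [DecidableEq n]

theorem entropy_eq_trace_cfc {ρ : Matrix n n ℂ} (hρ : ρ.IsHermitian) :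
    (entropy ρ : ℂ) = (cfc Real.negMulLog ρ).trace := by
  rw [entropy, dif_pos hρ, hρ.cfc_eq, IsHermitian.cfc, Unitary.conjStarAlgAut_apply,
    trace_mul_cycle, Unitary.coe_star_mul_self, one_mul, trace_diagonal]
  simp [Real.negMulLog, Finset.sum_neg_distrib]

theorem entropy_zero : entropy (0 : Matrix n n ℂ) = 0 := by
  have h := entropy_eq_trace_cfc (isHermitian_zero (n := n) (α := ℂ))
  simpa using h

theorem entropy_add_of_mul_eq_zero {M N : Matrix n n ℂ} (hM : M.IsHermitian) (hN : N.IsHermitian)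
    (hMN : M * N = 0) : entropy (M + N) = entropy M + entropy N := by
  have := entropy_eq_trace_cfc (hM.add hN)
  rw [Matrix.cfc_add_of_mul_eq_zero hM hN hMN Real.negMulLog_zero, trace_add,
    ← entropy_eq_trace_cfc hM, ← entropy_eq_trace_cfc hN] at this
  exact_mod_cast this

theorem entropy_sum_of_pairwise_mul_eq_zero {ι : Type*} (s : Finset ι) {M : ι → Matrix n n ℂ}
    (hM : ∀ i, (M i).IsHermitian) (horth : Pairwise fun i j => M i * M j = 0) :
    entropy (∑ i ∈ s, M i) = ∑ i ∈ s, entropy (M i) := by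
  classical
  induction s using Finset.induction_on with
  | empty => simpa using entropy_zero
  | insert i s hi ih =>
    rw [Finset.sum_insert hi, Finset.sum_insert hi, ← ih]
    refine entropy_add_of_mul_eq_zero (hM i) (isSelfAdjoint_sum s fun j _ => hM j) ?_
    rw [Finset.mul_sum]
    exact Finset.sum_eq_zero fun j hj => horth (ne_of_mem_of_not_mem hj hi).symm

theorem entropy_smul {σ : Matrix n n ℂ} (hσ : σ.IsHermitian) (p : ℝ) :
    (entropy (p • σ) : ℂ) = p * entropy σ + Real.negMulLog p * σ.trace := by
  have hscale : (fun x => Real.negMulLog (p • x)) =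
      fun x => p * Real.negMulLog x + Real.negMulLog p * x := by
    funext x; rw [smul_eq_mul, Real.negMulLog_mul]; ring
  rw [entropy_eq_trace_cfc (hσ.smul (.all p)), ← cfc_comp_smul p Real.negMulLog σ, hscale,
    cfc_add .., cfc_const_mul .., cfc_const_mul .., cfc_id' ℝ σ, trace_add, trace_smul, trace_smul,
    ← entropy_eq_trace_cfc hσ]
  simp [Complex.real_smul]

theorem entropy_sum_smul_of_pairwise_mul_eq_zero {ι : Type*} [Fintype ι]
    {σ : ι → Matrix n n ℂ} (hσ : ∀ i, IsState (σ i)) (horth : Pairwise fun i j => σ i * σ j = 0) (p : ι → ℝ) :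
    entropy (∑ i, p i • σ i) = ∑ i, (p i * entropy (σ i) + Real.negMulLog (p i)) := by
  rw [entropy_sum_of_pairwise_mul_eq_zero _ (fun i => (hσ i).1.1.smul (.all (p i)))
    fun i j hij => by simp only [smul_mul_smul_comm, horth hij, smul_zero]]
  refine Finset.sum_congr rfl fun i _ => ?_
  have := entropy_smul (hσ i).1.1 (p i)
  rw [(hσ i).2, mul_one] at this
  exact_mod_cast this

end Entropy

section Marginals

variable {A B C X Y : Type*}

theorem ptraceLeft_eq_sum_submatrix [Fintype X] (ρ : Matrix (X × Y) (X × Y) ℂ) :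
    ptraceLeft ρ = ∑ x, ρ.submatrix (x, ·) (x, ·) := by
  ext; simp [ptraceLeft, Matrix.sum_apply]

theorem margAB_eq_sum_submatrix [Fintype C] (ρ : Matrix (A × B × C) (A × B × C) ℂ) :
    margAB ρ = ∑ c, ρ.submatrix (fun x => (x.1, x.2, c)) (fun x => (x.1, x.2, c)) := by
  ext; simp [margAB, Matrix.sum_apply]

theorem margAC_eq_sum_submatrix [Fintype B] (ρ : Matrix (A × B × C) (A × B × C) ℂ) :
    margAC ρ = ∑ b, ρ.submatrix (fun x => (x.1, b, x.2)) (fun x => (x.1, b, x.2)) := by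
  ext; simp [margAC, Matrix.sum_apply]

theorem IsState.ptraceLeft [Fintype X] [Fintype Y] {ρ : Matrix (X × Y) (X × Y) ℂ}
    (hρ : IsState ρ) : IsState (ptraceLeft ρ) := by
  refine ⟨?_, ?_⟩
  · rw [ptraceLeft_eq_sum_submatrix]
    exact posSemidef_sum _ fun x _ => hρ.1.submatrix _
  · rw [← hρ.2]
    simp only [trace, diag, _root_.ptraceLeft, Fintype.sum_prod_type]
    exact Finset.sum_comm

theorem IsState.margAB [Fintype A] [Fintype B] [Fintype C]
    {ρ : Matrix (A × B × C) (A × B × C) ℂ} (hρ : IsState ρ) : IsState (margAB ρ) := by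
  refine ⟨?_, ?_⟩
  · rw [margAB_eq_sum_submatrix]
    exact posSemidef_sum _ fun x _ => hρ.1.submatrix _
  · rw [← hρ.2]
    simp only [trace, diag, _root_.margAB, Fintype.sum_prod_type]

theorem IsState.margAC [Fintype A] [Fintype B] [Fintype C]
    {ρ : Matrix (A × B × C) (A × B × C) ℂ} (hρ : IsState ρ) : IsState (margAC ρ) := by
  refine ⟨?_, ?_⟩
  · rw [margAC_eq_sum_submatrix]
    exact posSemidef_sum _ fun x _ => hρ.1.submatrix _
  · rw [← hρ.2]
    simp only [trace, diag, _root_.margAC, Fintype.sum_prod_type]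
    exact Finset.sum_congr rfl fun a _ => Finset.sum_comm

theorem IsState.margB [Fintype A] [Fintype B] [Fintype C]
    {ρ : Matrix (A × B × C) (A × B × C) ℂ} (hρ : IsState ρ) : IsState (margB ρ) :=
  hρ.margAB.ptraceLeft

theorem IsState.margC [Fintype A] [Fintype B] [Fintype C]
    {ρ : Matrix (A × B × C) (A × B × C) ℂ} (hρ : IsState ρ) : IsState (margC ρ) :=
  hρ.margAC.ptraceLeft

variable {ι : Type*} [Fintype ι] (p : ι → ℝ)

theorem ptraceLeft_sum_smul [Fintype X] (ρ : ι → Matrix (X × Y) (X × Y) ℂ) :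
    ptraceLeft (∑ i, p i • ρ i) = ∑ i, p i • ptraceLeft (ρ i) := by
  ext; simp only [ptraceLeft, Matrix.sum_apply, Matrix.smul_apply, Finset.smul_sum]
  exact Finset.sum_comm

theorem margAB_sum_smul [Fintype C] (ρ : ι → Matrix (A × B × C) (A × B × C) ℂ) :
    margAB (∑ i, p i • ρ i) = ∑ i, p i • margAB (ρ i) := by
  ext; simp only [margAB, Matrix.sum_apply, Matrix.smul_apply, Finset.smul_sum]
  exact Finset.sum_comm

theorem margAC_sum_smul [Fintype B] (ρ : ι → Matrix (A × B × C) (A × B × C) ℂ) :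
    margAC (∑ i, p i • ρ i) = ∑ i, p i • margAC (ρ i) := by
  ext; simp only [margAC, Matrix.sum_apply, Matrix.smul_apply, Finset.smul_sum]
  exact Finset.sum_comm

theorem margB_sum_smul [Fintype A] [Fintype C] (ρ : ι → Matrix (A × B × C) (A × B × C) ℂ) :
    margB (∑ i, p i • ρ i) = ∑ i, p i • margB (ρ i) :=
  (congrArg ptraceLeft (margAB_sum_smul p ρ)).trans (ptraceLeft_sum_smul p _)

theorem margC_sum_smul [Fintype A] [Fintype B] (ρ : ι → Matrix (A × B × C) (A × B × C) ℂ) :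
    margC (∑ i, p i • ρ i) = ∑ i, p i • margC (ρ i) :=
  (congrArg ptraceLeft (margAC_sum_smul p ρ)).trans (ptraceLeft_sum_smul p _)

end Marginals

namespace Matrix

theorem PosSemidef.exists_eq_conjTranspose_mul_self {𝕜 n : Type*} [RCLike 𝕜] [Fintype n]
    {M : Matrix n n 𝕜} (hM : M.PosSemidef) : ∃ S : Matrix n n 𝕜, M = Sᴴ * S := by
  open scoped MatrixOrder in
  exact CStarAlgebra.nonneg_iff_eq_star_mul_self.mp hM.nonneg

theorem mul_conjTranspose_eq_zero_of_gram_mul_gram_eq_zero {𝕜 m n k : Type*} [RCLike 𝕜]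
    [Fintype m] [Fintype n] [Fintype k] {S : Matrix m n 𝕜} {T : Matrix k n 𝕜}
    (h : Sᴴ * S * (Tᴴ * T) = 0) : S * Tᴴ = 0 := by
  have hS : S * (Tᴴ * T) = 0 := (conjTranspose_mul_self_mul_eq_zero S _).mp h
  have hS' : Tᴴ * T * Sᴴ = 0 := by
    simpa [conjTranspose_mul, Matrix.mul_assoc] using congrArg conjTranspose hS
  have hT : T * Sᴴ = 0 := (conjTranspose_mul_self_mul_eq_zero T _).mp hS'
  simpa using congrArg conjTranspose hT

end Matrix

section OrthogonalLift

variable {m k X Y : Type*}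

def colFactorToRow (S : Matrix m (X × Y) ℂ) : Matrix (m × X) Y ℂ :=
  Matrix.of fun kx y => S kx.1 (kx.2, y)

theorem ptraceLeft_conjTranspose_mul_self [Fintype m] [Fintype X] (S : Matrix m (X × Y) ℂ) :
    ptraceLeft (Sᴴ * S) = (colFactorToRow S)ᴴ * colFactorToRow S := by
  ext y y'
  simp only [ptraceLeft, colFactorToRow, mul_apply, conjTranspose_apply, of_apply,
    Fintype.sum_prod_type]
  exact Finset.sum_comm

theorem mul_conjTranspose_eq_zero_of_colFactorToRow [Fintype X] [Fintype Y]
    {S : Matrix m (X × Y) ℂ} {T : Matrix k (X × Y) ℂ}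
    (h : colFactorToRow S * (colFactorToRow T)ᴴ = 0) : S * Tᴴ = 0 := by
  ext i j
  have hx (x : X) := congrFun (congrFun h (i, x)) (j, x)
  simp only [colFactorToRow, mul_apply, conjTranspose_apply, of_apply, Matrix.zero_apply] at hx
  simp only [mul_apply, conjTranspose_apply, Matrix.zero_apply, Fintype.sum_prod_type, hx,
    Finset.sum_const_zero]

theorem mul_eq_zero_of_ptraceLeft_mul_eq_zero [Fintype X] [Fintype Y]
    {σ τ : Matrix (X × Y) (X × Y) ℂ} (hσ : σ.PosSemidef) (hτ : τ.PosSemidef)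
    (h : ptraceLeft σ * ptraceLeft τ = 0) : σ * τ = 0 := by
  obtain ⟨S, rfl⟩ := hσ.exists_eq_conjTranspose_mul_self
  obtain ⟨T, rfl⟩ := hτ.exists_eq_conjTranspose_mul_self
  rw [ptraceLeft_conjTranspose_mul_self, ptraceLeft_conjTranspose_mul_self] at h
  have hST : S * Tᴴ = 0 := mul_conjTranspose_eq_zero_of_colFactorToRow
    (Matrix.mul_conjTranspose_eq_zero_of_gram_mul_gram_eq_zero h)
  rw [Matrix.mul_assoc, ← Matrix.mul_assoc S, hST, Matrix.zero_mul, Matrix.mul_zero]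

end OrthogonalLift

theorem Ta_affine_of_orthogonal_marginals_general {A B C : Type*}
    [Fintype A] [Fintype B] [Fintype C]
    [DecidableEq A] [DecidableEq B] [DecidableEq C]
    (ρ : Matrix (A × B × C) (A × B × C) ℂ)
    (K : ℕ) (p : Fin K → ℝ) (ρs : Fin K → Matrix (A × B × C) (A × B × C) ℂ)
    (hs : ∀ k, IsState (ρs k)) (hdec : ρ = ∑ k, p k • ρs k)
    (horthB : ∀ k k', k ≠ k' → margB (ρs k) * margB (ρs k') = 0)
    (horthC : ∀ k k', k ≠ k' → margC (ρs k) * margC (ρs k') = 0) :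
    Ta ρ = ∑ k, p k * Ta (ρs k) := by
  have horthAB : Pairwise fun k l => margAB (ρs k) * margAB (ρs l) = 0 := fun k l hkl =>
    mul_eq_zero_of_ptraceLeft_mul_eq_zero (hs k).margAB.1 (hs l).margAB.1 (horthB k l hkl)
  have horthAC : Pairwise fun k l => margAC (ρs k) * margAC (ρs l) = 0 := fun k l hkl =>
    mul_eq_zero_of_ptraceLeft_mul_eq_zero (hs k).margAC.1 (hs l).margAC.1 (horthC k l hkl)
  rw [hdec, Ta, margAB_sum_smul, margAC_sum_smul, margB_sum_smul, margC_sum_smul,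
    entropy_sum_smul_of_pairwise_mul_eq_zero (fun k => (hs k).margAB) horthAB,
    entropy_sum_smul_of_pairwise_mul_eq_zero (fun k => (hs k).margAC) horthAC,
    entropy_sum_smul_of_pairwise_mul_eq_zero (fun k => (hs k).margB) fun k l => horthB k l,
    entropy_sum_smul_of_pairwise_mul_eq_zero (fun k => (hs k).margC) fun k l => horthC k l,
    ← Finset.sum_add_distrib, ← Finset.sum_sub_distrib, ← Finset.sum_sub_distrib]
  exact Finset.sum_congr rfl fun k _ => by rw [Ta]; ring

/-- if `ρ_ABC = ∑ₖ pₖ ρᵏ_ABC` is a convex combination of states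
whose `B`-marginals are mutually orthogonal and whose `C`-marginals are
mutually orthogonal, then `T^(a)(ρ_ABC) = ∑ₖ pₖ T^(a)(ρᵏ_ABC)`. -/
theorem Ta_affine_of_orthogonal_marginals {A B C : Type*}
    [Fintype A] [Fintype B] [Fintype C]
    [DecidableEq A] [DecidableEq B] [DecidableEq C]
    (ρ : Matrix (A × B × C) (A × B × C) ℂ) (hρ : IsState ρ)
    (K : ℕ) (p : Fin K → ℝ) (ρs : Fin K → Matrix (A × B × C) (A × B × C) ℂ)
    (hp : ∀ k, 0 ≤ p k) (hp1 : ∑ k, p k = 1)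
    (hs : ∀ k, IsState (ρs k)) (hdec : ρ = ∑ k, p k • ρs k)
    (horthB : ∀ k k', k ≠ k' → margB (ρs k) * margB (ρs k') = 0)
    (horthC : ∀ k k', k ≠ k' → margC (ρs k) * margC (ρs k') = 0) :
    Ta ρ = ∑ k, p k * Ta (ρs k) :=
  Ta_affine_of_orthogonal_marginals_general ρ K p ρs hs hdec horthB horthC

end
end

section
/- Suppose H_B = H_{B^L} ⊗ H_{B^R} and H_C = H_{C^L} ⊗ H_{C^R}, and set H_Y = H_{B^L} ⊗ H_{C^L} and H_Z = H_{B^R} ⊗ H_{C^R} (so that H_Y ⊗ H_Z ≅ H_B ⊗ H_C). Then every state of the form ρ_ABC = |ψ_AY⟩⟨ψ_AY| ⊗ ρ_Z, where |ψ_AY⟩ is a unit vector in H_A ⊗ H_Y and ρ_Z is a state on H_Z (viewed as a state on H_A ⊗ H_B ⊗ H_C via the factor reordering), satisfies T^(a)(ρ_ABC) = 0. -/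
open Matrix Kronecker
open scoped Classical ComplexOrder

noncomputable section

/-! Up to reordering the factors, the four marginals entering `T^(a)` are product states:
`ρ_AB = ψ_{AB^L} ⊗ ρ_{B^R}`, `ρ_AC = ψ_{AC^L} ⊗ ρ_{C^R}`, `ρ_B = ψ_{B^L} ⊗ ρ_{B^R}` and
`ρ_C = ψ_{C^L} ⊗ ρ_{C^R}`, where the `ψ_•` are marginals of `|ψ⟩⟨ψ|` and `ρ_{B^R}`, `ρ_{C^R}`
those of `ρ_Z`. Entropy is additive on tensor products, `S(M ⊗ N) = Tr N · S(M) + Tr M · S(N)`,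
and the two marginals `M Mᴴ` and `(Mᴴ M)ᵀ` of a pure state with coefficient matrix `M` have the
same nonzero spectrum, so `S(ψ_{AB^L}) = S(ψ_{C^L})` and `S(ψ_{AC^L}) = S(ψ_{B^L})`. The terms
of `T^(a)` then cancel pairwise. -/

open Polynomial Real

theorem Matrix.IsHermitian.kronecker {n m : Type*} {M : Matrix n n ℂ} {N : Matrix m m ℂ}
    (hM : M.IsHermitian) (hN : N.IsHermitian) : (M ⊗ₖ N).IsHermitian := by
  rw [IsHermitian, conjTranspose_kronecker, hM.eq, hN.eq]

section Entropy

variable {n m : Type*} [Fintype n] [DecidableEq n] [Fintype m] [DecidableEq m]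

theorem entropy_eq_sum_roots_charpoly {A : Matrix n n ℂ} (hA : A.IsHermitian) :
    entropy A = (A.charpoly.roots.map fun z => negMulLog z.re).sum := by
  rw [entropy, dif_pos hA, hA.roots_charpoly_eq_eigenvalues, Multiset.map_map,
    ← Finset.sum_eq_multiset_sum, ← Finset.sum_neg_distrib]
  simp [negMulLog]

theorem entropy_eq_sum_negMulLog_of_charpoly_eq {ι : Type*} [Fintype ι] {A : Matrix n n ℂ}
    (hA : A.IsHermitian) (d : ι → ℝ) (h : A.charpoly = ∏ i, (X - C (d i : ℂ))) :
    entropy A = ∑ i, negMulLog (d i) := by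
  rw [entropy_eq_sum_roots_charpoly hA, h,
    roots_prod _ _ (Finset.prod_ne_zero_iff.2 fun _ _ => X_sub_C_ne_zero _)]
  simp

theorem entropy_eq_sum_negMulLog_eigenvalues {A : Matrix n n ℂ} (hA : A.IsHermitian) :
    entropy A = ∑ i, negMulLog (hA.eigenvalues i) :=
  entropy_eq_sum_negMulLog_of_charpoly_eq hA _ hA.charpoly_eq

/-- Extra zero eigenvalues do not change the entropy, since `negMulLog 0 = 0`. -/
theorem entropy_eq_of_X_pow_mul_charpoly_eq {A : Matrix n n ℂ} {B : Matrix m m ℂ}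
    (hA : A.IsHermitian) (hB : B.IsHermitian) {k l : ℕ}
    (h : X ^ k * A.charpoly = X ^ l * B.charpoly) : entropy A = entropy B := by
  have hroots := congrArg roots h
  rw [roots_mul (mul_ne_zero (pow_ne_zero _ X_ne_zero) A.charpoly_monic.ne_zero),
    roots_mul (mul_ne_zero (pow_ne_zero _ X_ne_zero) B.charpoly_monic.ne_zero),
    roots_X_pow, roots_X_pow] at hroots
  have := congrArg (fun s : Multiset ℂ => (s.map fun z => negMulLog z.re).sum) hroots
  simpa [entropy_eq_sum_roots_charpoly hA, entropy_eq_sum_roots_charpoly hB,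
    Multiset.map_nsmul, Multiset.sum_nsmul] using this

theorem entropy_submatrix_equiv {A : Matrix n n ℂ} (hA : A.IsHermitian) (e : m ≃ n) :
    entropy (A.submatrix e e) = entropy A :=
  entropy_eq_of_X_pow_mul_charpoly_eq ((isHermitian_submatrix_equiv e).2 hA) hA
    (k := 0) (l := 0) (by simpa using charpoly_reindex e.symm A)

theorem Matrix.IsHermitian.charpoly_kronecker {M : Matrix n n ℂ} {N : Matrix m m ℂ}
    (hM : M.IsHermitian) (hN : N.IsHermitian) :
    (M ⊗ₖ N).charpoly =
      ∏ p : n × m, (X - C ((hM.eigenvalues p.1 * hN.eigenvalues p.2 : ℝ) : ℂ)) := by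
  conv_lhs => rw [hM.spectral_theorem, hN.spectral_theorem]
  rw [Unitary.conjStarAlgAut_apply, Unitary.conjStarAlgAut_apply, mul_kronecker_mul,
    mul_kronecker_mul, charpoly_mul_comm, ← mul_assoc, ← mul_kronecker_mul,
    Unitary.coe_star_mul_self, Unitary.coe_star_mul_self, one_kronecker_one, one_mul,
    diagonal_kronecker_diagonal, charpoly_diagonal]
  simp

theorem entropy_kronecker {M : Matrix n n ℂ} {N : Matrix m m ℂ}
    (hM : M.IsHermitian) (hN : N.IsHermitian) :
    entropy (M ⊗ₖ N) = N.trace.re * entropy M + M.trace.re * entropy N := by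
  rw [entropy_eq_sum_negMulLog_of_charpoly_eq (hM.kronecker hN) _ (hM.charpoly_kronecker hN),
    entropy_eq_sum_negMulLog_eigenvalues hM, entropy_eq_sum_negMulLog_eigenvalues hN,
    hM.trace_eq_sum_eigenvalues, hN.trace_eq_sum_eigenvalues, Fintype.sum_prod_type]
  simp only [negMulLog_mul, Finset.sum_add_distrib, ← Finset.sum_mul, ← Finset.mul_sum]
  simp

end Entropy

section PartialTrace

variable {X Y : Type*}

theorem trace_ptraceRight [Fintype X] [Fintype Y] (ρ : Matrix (X × Y) (X × Y) ℂ) :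
    (ptraceRight ρ).trace = ρ.trace := by
  simp [trace, ptraceRight, Fintype.sum_prod_type]

theorem trace_ptraceLeft [Fintype X] [Fintype Y] (ρ : Matrix (X × Y) (X × Y) ℂ) :
    (ptraceLeft ρ).trace = ρ.trace := by
  simp [trace, ptraceLeft, Fintype.sum_prod_type, Finset.sum_comm (γ := X)]

theorem isHermitian_ptraceRight [Fintype Y] {ρ : Matrix (X × Y) (X × Y) ℂ}
    (hρ : ρ.IsHermitian) : (ptraceRight ρ).IsHermitian := by
  ext x x'
  simp [ptraceRight, ← hρ.apply (x, _)]

theorem isHermitian_ptraceLeft [Fintype X] {ρ : Matrix (X × Y) (X × Y) ℂ}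
    (hρ : ρ.IsHermitian) : (ptraceLeft ρ).IsHermitian := by
  ext y y'
  simp [ptraceLeft, ← hρ.apply (_, y)]

theorem ptraceRight_pureSt [Fintype Y] (φ : X × Y → ℂ) :
    ptraceRight (pureSt φ) = of (Function.curry φ) * (of (Function.curry φ))ᴴ := by
  ext x x'
  simp [ptraceRight, pureSt, vecMulVec_apply, mul_apply]

theorem ptraceLeft_pureSt [Fintype X] (φ : X × Y → ℂ) :
    ptraceLeft (pureSt φ) = ((of (Function.curry φ))ᴴ * of (Function.curry φ))ᵀ := by
  ext y y'
  simp [ptraceLeft, pureSt, vecMulVec_apply, mul_apply, mul_comm]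

theorem isHermitian_ptraceRight_pureSt [Fintype Y] (φ : X × Y → ℂ) :
    (ptraceRight (pureSt φ)).IsHermitian :=
  ptraceRight_pureSt φ ▸ isHermitian_mul_conjTranspose_self _

theorem isHermitian_ptraceLeft_pureSt [Fintype X] (φ : X × Y → ℂ) :
    (ptraceLeft (pureSt φ)).IsHermitian :=
  ptraceLeft_pureSt φ ▸ (isHermitian_conjTranspose_mul_self _).transpose

theorem entropy_ptraceRight_pureSt [Fintype X] [Fintype Y] [DecidableEq X] [DecidableEq Y]
    (φ : X × Y → ℂ) : entropy (ptraceRight (pureSt φ)) = entropy (ptraceLeft (pureSt φ)) := by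
  refine entropy_eq_of_X_pow_mul_charpoly_eq (isHermitian_ptraceRight_pureSt φ)
    (isHermitian_ptraceLeft_pureSt φ) (k := Fintype.card Y) (l := Fintype.card X) ?_
  rw [ptraceRight_pureSt, ptraceLeft_pureSt, charpoly_transpose]
  exact charpoly_mul_comm' _ _

theorem trace_pureSt_comp_equiv [Fintype X] [Fintype Y] (ψ : X → ℂ) (e : Y ≃ X) :
    (pureSt (ψ ∘ e)).trace = (pureSt ψ).trace :=
  e.sum_comp fun i => pureSt ψ i i

end PartialTrace

def assocSwap (A B C : Type*) : (A × C) × B ≃ A × (B × C) where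
  toFun x := (x.1.1, x.2, x.1.2)
  invFun x := ((x.1, x.2.2), x.2.1)

section Marginals

variable {A BL BR CL CR : Type*}

def stateYZ (ψ : A × (BL × CL) → ℂ) (ρZ : Matrix (BR × CR) (BR × CR) ℂ) :
    Matrix (A × (BL × BR) × (CL × CR)) (A × (BL × BR) × (CL × CR)) ℂ :=
  (pureSt ψ ⊗ₖ ρZ).submatrix (reindexYZ A BL BR CL CR).symm (reindexYZ A BL BR CL CR).symm

variable (ψ : A × (BL × CL) → ℂ) (ρZ : Matrix (BR × CR) (BR × CR) ℂ)

theorem margAB_stateYZ [Fintype CL] [Fintype CR] :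
    margAB (stateYZ ψ ρZ) = (ptraceRight (pureSt (ψ ∘ Equiv.prodAssoc A BL CL)) ⊗ₖ
      ptraceRight ρZ).submatrix (Equiv.prodAssoc A BL BR).symm (Equiv.prodAssoc A BL BR).symm := by
  ext ⟨a, bl, br⟩ ⟨a', bl', br'⟩
  simp [margAB, stateYZ, reindexYZ, pureSt, vecMulVec_apply, ptraceRight,
    Fintype.sum_prod_type, Finset.sum_mul_sum]

theorem margAC_stateYZ [Fintype BL] [Fintype BR] :
    margAC (stateYZ ψ ρZ) = (ptraceRight (pureSt (ψ ∘ assocSwap A BL CL)) ⊗ₖ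
      ptraceLeft ρZ).submatrix (Equiv.prodAssoc A CL CR).symm (Equiv.prodAssoc A CL CR).symm := by
  ext ⟨a, cl, cr⟩ ⟨a', cl', cr'⟩
  simp [margAC, stateYZ, reindexYZ, assocSwap, pureSt, vecMulVec_apply, ptraceLeft,
    ptraceRight, Fintype.sum_prod_type, Finset.sum_mul_sum]

theorem margB_stateYZ [Fintype A] [Fintype CL] [Fintype CR] :
    margB (stateYZ ψ ρZ) = ptraceLeft (pureSt (ψ ∘ assocSwap A BL CL)) ⊗ₖ ptraceRight ρZ := by
  ext ⟨bl, br⟩ ⟨bl', br'⟩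
  simp [margB, stateYZ, reindexYZ, assocSwap, pureSt, vecMulVec_apply, ptraceLeft,
    ptraceRight, Fintype.sum_prod_type, Finset.sum_mul, ← Finset.mul_sum]

theorem margC_stateYZ [Fintype A] [Fintype BL] [Fintype BR] :
    margC (stateYZ ψ ρZ) = ptraceLeft (pureSt (ψ ∘ Equiv.prodAssoc A BL CL)) ⊗ₖ
      ptraceLeft ρZ := by
  ext ⟨cl, cr⟩ ⟨cl', cr'⟩
  simp [margC, stateYZ, reindexYZ, pureSt, vecMulVec_apply, ptraceLeft,
    Fintype.sum_prod_type, Finset.sum_mul, ← Finset.mul_sum]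

end Marginals

theorem Ta_eq_zero_of_pure_tensor_general {A BL BR CL CR : Type*}
    [Fintype A] [Fintype BL] [Fintype BR] [Fintype CL] [Fintype CR]
    [DecidableEq A] [DecidableEq BL] [DecidableEq BR] [DecidableEq CL] [DecidableEq CR]
    (ψ : A × (BL × CL) → ℂ)
    (ρZ : Matrix (BR × CR) (BR × CR) ℂ) (hZ : IsState ρZ) :
    Ta ((pureSt ψ ⊗ₖ ρZ).submatrix
        ⇑(reindexYZ A BL BR CL CR).symm ⇑(reindexYZ A BL BR CL CR).symm) = 0 := by
  set ψAB := ψ ∘ Equiv.prodAssoc A BL CL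
  set ψAC := ψ ∘ assocSwap A BL CL
  have hB := isHermitian_ptraceRight hZ.1.1
  have hC := isHermitian_ptraceLeft hZ.1.1
  change Ta (stateYZ ψ ρZ) = 0
  rw [Ta, margAB_stateYZ, margAC_stateYZ, margB_stateYZ, margC_stateYZ,
    entropy_submatrix_equiv ((isHermitian_ptraceRight_pureSt ψAB).kronecker hB),
    entropy_submatrix_equiv ((isHermitian_ptraceRight_pureSt ψAC).kronecker hC),
    entropy_kronecker (isHermitian_ptraceRight_pureSt ψAB) hB,
    entropy_kronecker (isHermitian_ptraceRight_pureSt ψAC) hC,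
    entropy_kronecker (isHermitian_ptraceLeft_pureSt ψAC) hB,
    entropy_kronecker (isHermitian_ptraceLeft_pureSt ψAB) hC,
    entropy_ptraceRight_pureSt ψAB, entropy_ptraceRight_pureSt ψAC]
  simp only [trace_ptraceRight, trace_ptraceLeft, ψAB, ψAC, trace_pureSt_comp_equiv]
  ring

/-- with `H_B = H_{B^L} ⊗ H_{B^R}`, `H_C = H_{C^L} ⊗ H_{C^R}`,
`H_Y = H_{B^L} ⊗ H_{C^L}` and `H_Z = H_{B^R} ⊗ H_{C^R}`, every state of the
form `ρ_ABC = |ψ_AY⟩⟨ψ_AY| ⊗ ρ_Z` (viewed on `H_A ⊗ H_B ⊗ H_C` via the factor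
reordering) satisfies `T^(a)(ρ_ABC) = 0`. -/
theorem Ta_eq_zero_of_pure_tensor {A BL BR CL CR : Type*}
    [Fintype A] [Fintype BL] [Fintype BR] [Fintype CL] [Fintype CR]
    [DecidableEq A] [DecidableEq BL] [DecidableEq BR] [DecidableEq CL] [DecidableEq CR]
    (ψ : A × (BL × CL) → ℂ) (hψ : UnitVec ψ)
    (ρZ : Matrix (BR × CR) (BR × CR) ℂ) (hZ : IsState ρZ) :
    Ta ((pureSt ψ ⊗ₖ ρZ).submatrix
        ⇑(reindexYZ A BL BR CL CR).symm ⇑(reindexYZ A BL BR CL CR).symm) = 0 :=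
  Ta_eq_zero_of_pure_tensor_general ψ ρZ hZ

end
end
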